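/- arXiv:2303.18099 — 2 statements merged into one kernel-verified Lean document; each statement's English description precedes it below -/
import Mathlib

section
/- Diagonal (fixed point) lemma: let T be a computably axiomatized extension of Robinson's arithmetic. For every formula C(x) with one free variable there exists a sentence G such that T ⊢ G ↔ C(⌜G⌝), where ⌜G⌝ is the numeral of the Gödel number of G. -/
open FirstOrder FirstOrder.Language

/-- The function symbols of the language of arithmetic: `0`, `S`, `+`, `×`. -/
inductive ArithFunc : ℕ → Type
  | zero : ArithFunc 0
  | succ : ArithFunc 1
  | add : ArithFunc 2
  | mul : ArithFunc 2

/-- The first-order language of arithmetic `{0, S, +, ×, =}` (equality is built in). -/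
def LA : FirstOrder.Language := ⟨ArithFunc, fun _ => Empty⟩

instance : Encodable (Σ n, LA.Functions n) :=
  Encodable.ofLeftInverse
    (fun f => match f with
      | ⟨_, .zero⟩ => 0 | ⟨_, .succ⟩ => 1 | ⟨_, .add⟩ => 2 | ⟨_, .mul⟩ => 3)
    (fun n => match n with
      | 0 => ⟨0, .zero⟩ | 1 => ⟨1, .succ⟩ | 2 => ⟨2, .add⟩ | _ => ⟨2, .mul⟩)
    (fun f => by rcases f with ⟨_, f⟩; cases f <;> rfl)

instance (n : ℕ) : Encodable (LA.Relations n) := inferInstanceAs (Encodable Empty)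

/-- The term `0`. -/
def zeroT {α : Type} : LA.Term α := Term.func ArithFunc.zero ![]
/-- The successor of a term. -/
def succT {α : Type} (t : LA.Term α) : LA.Term α := Term.func ArithFunc.succ ![t]
/-- The sum of two terms. -/
def addT {α : Type} (t s : LA.Term α) : LA.Term α := Term.func ArithFunc.add ![t, s]
/-- The product of two terms. -/
def mulT {α : Type} (t s : LA.Term α) : LA.Term α := Term.func ArithFunc.mul ![t, s]

/-- The numeral `n̄ = Sⁿ(0)`. -/
def num {α : Type} : ℕ → LA.Term α
  | 0 => zeroT
  | n + 1 => succT (num n)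

/-- Robinson's arithmetic `Q`. -/
def Q : LA.Theory :=
  { ∀' ∼(succT &0 =' zeroT),
    ∀' ∀' (succT &0 =' succT &1 ⟹ &0 =' &1),
    ∀' ((&0 =' zeroT) ⊔ ∃' (&0 =' succT &1)),
    ∀' (addT &0 zeroT =' &0),
    ∀' ∀' (addT &0 (succT &1) =' succT (addT &0 &1)),
    ∀' (mulT &0 zeroT =' zeroT),
    ∀' ∀' (mulT &0 (succT &1) =' addT (mulT &0 &1) &0) }

/-- The standard model `ℕ` of arithmetic. -/
instance : LA.Structure ℕ where
  funMap {_} f := match f with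
    | .zero => fun _ => 0
    | .succ => fun v => v 0 + 1
    | .add => fun v => v 0 + v 1
    | .mul => fun v => v 0 * v 1
  RelMap {_} r := Empty.elim r

/-- The Gödel number of a sentence, via Mathlib's encoding of first-order formulas. -/
def gnum (φ : LA.Sentence) : ℕ := Encodable.encode (BoundedFormula.listEncode φ)

/-- A theory is computably axiomatized when its set of (Gödel numbers of) axioms is
decidable. -/
def ComputablyAxiomatized (T : LA.Theory) : Prop :=
  ComputablePred fun n : ℕ => ∃ φ ∈ T, gnum φ = n

/-!
The numerals form an initial segment of every model of `Q`, so bounded formulas are absolute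
between `ℕ` and such models. A function whose graph is certified by a bounded formula
`φ(x, c, y)` is therefore defined in every model of `Q` by "`y` comes with the least certificate".

Apply this to `diagCode`, which reads `x = ⟨j, d⟩` as the list of `j` formula symbols coded by `d`
through Gödel's β-function, appends the numeral `x̄` and a fixed tail, and returns the code of the
result; its computation is certified by β-codes of its intermediate values. Let `D(y, x)` define
`diagCode` and let `b` code the symbols of `G := ∃ y x, D(y, x) ∧ C(y) ∧ x = b̄` before the numeral.
Then `diagCode b = ⌜G⌝`, so every model of `T` satisfies `G ↔ ∃ y, y = ⌜G⌝ ∧ C(y) ↔ C(⌜G⌝)`.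
-/

section QModel

open Structure

variable {M : Type} [LA.Structure M]

def zeroM (M : Type) [LA.Structure M] : M := funMap (L := LA) ArithFunc.zero ![]
def succM (a : M) : M := funMap (L := LA) ArithFunc.succ ![a]
def addM (a b : M) : M := funMap (L := LA) ArithFunc.add ![a, b]
def mulM (a b : M) : M := funMap (L := LA) ArithFunc.mul ![a, b]

def numM : ℕ → M
  | 0 => zeroM M
  | n + 1 => succM (numM n)

def leM (a b : M) : Prop := ∃ c, addM c a = b
def ltM (a b : M) : Prop := leM (succM a) b

@[simp] lemma realize_zeroT {α : Type} (v : α → M) :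
    (zeroT : LA.Term α).realize v = zeroM M :=
  congrArg (funMap (L := LA) ArithFunc.zero) (Subsingleton.elim _ _)

@[simp] lemma realize_succT {α : Type} (v : α → M) (t : LA.Term α) :
    (succT t).realize v = succM (t.realize v) :=
  congrArg _ (funext fun i => by fin_cases i; rfl)

@[simp] lemma realize_addT {α : Type} (v : α → M) (s t : LA.Term α) :
    (addT s t).realize v = addM (s.realize v) (t.realize v) :=
  congrArg _ (funext fun i => by fin_cases i <;> rfl)

@[simp] lemma realize_mulT {α : Type} (v : α → M) (s t : LA.Term α) :
    (mulT s t).realize v = mulM (s.realize v) (t.realize v) :=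
  congrArg _ (funext fun i => by fin_cases i <;> rfl)

@[simp] lemma realize_num {α : Type} (v : α → M) (n : ℕ) :
    (num n : LA.Term α).realize v = numM n := by
  induction n with
  | zero => exact realize_zeroT v
  | succ n ih => rw [num, realize_succT, ih, numM]

lemma numM_eq_iterate (n : ℕ) : (numM n : M) = succM^[n] (zeroM M) := by
  induction n with
  | zero => rfl
  | succ n ih => rw [numM, ih, Function.iterate_succ_apply']

structure IsQModel (M : Type) [LA.Structure M] : Prop where
  succ_ne_zero : ∀ a : M, succM a ≠ zeroM M
  succ_inj : ∀ a b : M, succM a = succM b → a = b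
  eq_zero_or_succ : ∀ a : M, a = zeroM M ∨ ∃ b, a = succM b
  add_zero : ∀ a : M, addM a (zeroM M) = a
  add_succ : ∀ a b : M, addM a (succM b) = succM (addM a b)
  mul_zero : ∀ a : M, mulM a (zeroM M) = zeroM M
  mul_succ : ∀ a b : M, mulM a (succM b) = addM (mulM a b) a

lemma IsQModel.of_model [M ⊨ Q] : IsQModel M := by
  have h := (Theory.model_iff Q).1 ‹M ⊨ Q›
  simp only [Q, Set.mem_insert_iff, Set.mem_singleton_iff, forall_eq_or_imp, forall_eq,
    Sentence.Realize, Formula.Realize, BoundedFormula.realize_all, BoundedFormula.realize_not,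
    BoundedFormula.realize_bdEqual, BoundedFormula.realize_sup, BoundedFormula.realize_ex,
    BoundedFormula.realize_imp, realize_succT, realize_zeroT, realize_addT, realize_mulT,
    Fin.isValue] at h
  obtain ⟨h1, h2, h3, h4, h5, h6, h7⟩ := h
  exact ⟨h1, h2, h3, h4, h5, h6, h7⟩

namespace IsQModel

variable (hM : IsQModel M)
include hM

lemma add_numM (a : M) (n : ℕ) : addM a (numM n) = succM^[n] a := by
  induction n with
  | zero => exact hM.add_zero a
  | succ n ih => rw [numM, hM.add_succ, ih, Function.iterate_succ_apply']

lemma numM_add (m n : ℕ) : (numM (m + n) : M) = addM (numM m) (numM n) := by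
  rw [hM.add_numM]
  induction n with
  | zero => rfl
  | succ n ih => rw [← add_assoc, numM, ih, Function.iterate_succ_apply']

lemma numM_mul (m n : ℕ) : (numM (m * n) : M) = mulM (numM m) (numM n) := by
  induction n with
  | zero => exact (hM.mul_zero _).symm
  | succ n ih => rw [Nat.mul_succ, hM.numM_add, ih, numM, hM.mul_succ]

lemma numM_injective : Function.Injective (numM : ℕ → M) := by
  intro m n h
  induction m generalizing n with
  | zero => cases n with
    | zero => rfl
    | succ n => exact absurd h.symm (hM.succ_ne_zero _)
  | succ m ih => cases n with
    | zero => exact absurd h (hM.succ_ne_zero _)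
    | succ n => exact congrArg Nat.succ (ih (hM.succ_inj _ _ h))

lemma leM_numM_iff {a : M} {n : ℕ} : leM a (numM n) ↔ ∃ k ≤ n, a = numM k := by
  constructor
  · rintro ⟨c, hc⟩
    induction n generalizing a with
    | zero =>
      rcases hM.eq_zero_or_succ a with rfl | ⟨b, rfl⟩
      · exact ⟨0, le_rfl, rfl⟩
      · exact absurd (hM.add_succ c b ▸ hc) (hM.succ_ne_zero _)
    | succ n ih =>
      rcases hM.eq_zero_or_succ a with rfl | ⟨b, rfl⟩
      · exact ⟨0, Nat.zero_le _, rfl⟩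
      · obtain ⟨k, hk, rfl⟩ := ih (hM.succ_inj _ _ (hM.add_succ c b ▸ hc))
        exact ⟨k + 1, Nat.succ_le_succ hk, rfl⟩
  · rintro ⟨k, hk, rfl⟩
    exact ⟨numM (n - k), by rw [← hM.numM_add, Nat.sub_add_cancel hk]⟩

lemma ltM_numM_iff {a : M} {n : ℕ} : ltM a (numM n) ↔ ∃ k < n, a = numM k := by
  rw [ltM, hM.leM_numM_iff]
  constructor
  · rintro ⟨_ | k, hk, h⟩
    · exact absurd h (hM.succ_ne_zero a)
    · exact ⟨k, hk, hM.succ_inj _ _ h⟩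
  · rintro ⟨k, hk, rfl⟩
    exact ⟨k + 1, hk, rfl⟩

lemma leM_numM_or_ltM (n : ℕ) (a : M) : leM a (numM n) ∨ ltM (numM n) a := by
  induction n generalizing a with
  | zero =>
    rcases hM.eq_zero_or_succ a with rfl | ⟨b, rfl⟩
    · exact Or.inl ⟨zeroM M, hM.add_zero _⟩
    · exact Or.inr ⟨b, by rw [← numM, hM.add_numM]; rfl⟩
  | succ n ih =>
    rcases ih a with h | ⟨c, rfl⟩
    · obtain ⟨k, hk, rfl⟩ := hM.leM_numM_iff.1 h
      exact Or.inl (hM.leM_numM_iff.2 ⟨k, Nat.le_succ_of_le hk, rfl⟩)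
    · rcases hM.eq_zero_or_succ c with rfl | ⟨c, rfl⟩
      · left
        refine hM.leM_numM_iff.2 ⟨n + 1, le_rfl, ?_⟩
        change addM (zeroM M) (numM (n + 1)) = numM (n + 1)
        rw [hM.add_numM, numM_eq_iterate]
      · right
        refine ⟨c, ?_⟩
        rw [← numM, ← numM, hM.add_numM, hM.add_numM, Function.iterate_succ_apply]

end IsQModel

end QModel

section Delta0

open Structure

variable {M : Type} [LA.Structure M] {α : Type} {n : ℕ}

@[simp] lemma leM_iff_le {a b : ℕ} : leM a b ↔ a ≤ b :=
  ⟨fun ⟨c, h⟩ => h ▸ Nat.le_add_left a c, fun h => ⟨b - a, Nat.sub_add_cancel h⟩⟩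

@[simp] lemma ltM_iff_lt {a b : ℕ} : ltM a b ↔ a < b := leM_iff_le

@[simp] lemma numM_nat (k : ℕ) : (numM k : ℕ) = k := by
  induction k with
  | zero => rfl
  | succ k ih => rw [numM, ih]; rfl

def IsQModel.numHom (hM : IsQModel M) : ℕ →[LA] M where
  toFun := numM
  map_fun' {n} f x := by
    cases f with
    | zero => exact congrArg (funMap (L := LA) ArithFunc.zero) (Subsingleton.elim _ _)
    | succ => exact congrArg (funMap (L := LA) ArithFunc.succ) (funext fun i => by fin_cases i; rfl)
    | add =>
      refine (hM.numM_add (x 0) (x 1)).trans ?_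
      exact congrArg (funMap (L := LA) ArithFunc.add) (funext fun i => by fin_cases i <;> rfl)
    | mul =>
      refine (hM.numM_mul (x 0) (x 1)).trans ?_
      exact congrArg (funMap (L := LA) ArithFunc.mul) (funext fun i => by fin_cases i <;> rfl)
  map_rel' r := r.elim

lemma IsQModel.realize_comp_numM (hM : IsQModel M) (t : LA.Term (α ⊕ Fin n)) (v : α → ℕ)
    (xs : Fin n → ℕ) :
    t.realize (Sum.elim (numM ∘ v) (numM ∘ xs)) = (numM (t.realize (Sum.elim v xs)) : M) := by
  rw [← Sum.comp_elim]
  exact HomClass.realize_term hM.numHom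

def weaken (t : LA.Term (α ⊕ Fin n)) : LA.Term (α ⊕ Fin (n + 1)) :=
  t.relabel (Sum.map id Fin.castSucc)

def leF (s t : LA.Term (α ⊕ Fin n)) : LA.BoundedFormula α n :=
  ∃' (addT &(Fin.last n) (weaken s) =' weaken t)

def ltF (s t : LA.Term (α ⊕ Fin n)) : LA.BoundedFormula α n := leF (succT s) t

def bex (t : LA.Term (α ⊕ Fin n)) (φ : LA.BoundedFormula α (n + 1)) : LA.BoundedFormula α n :=
  ∃' (leF &(Fin.last n) (weaken t) ⊓ φ)

def ballLt (t : LA.Term (α ⊕ Fin n)) (φ : LA.BoundedFormula α (n + 1)) : LA.BoundedFormula α n :=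
  ∀' (ltF &(Fin.last n) (weaken t) ⟹ φ)

@[simp] lemma realize_weaken (t : LA.Term (α ⊕ Fin n)) (v : α → M) (xs : Fin n → M) (a : M) :
    (weaken t).realize (Sum.elim v (Fin.snoc xs a)) = t.realize (Sum.elim v xs) := by
  rw [weaken, Term.realize_relabel]
  congr 1
  funext i
  rcases i with i | i <;> simp

@[simp] lemma realize_leF (s t : LA.Term (α ⊕ Fin n)) (v : α → M) (xs : Fin n → M) :
    (leF s t).Realize v xs ↔ leM (s.realize (Sum.elim v xs)) (t.realize (Sum.elim v xs)) := by
  simp [leF, BoundedFormula.realize_ex, leM]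

@[simp] lemma realize_ltF (s t : LA.Term (α ⊕ Fin n)) (v : α → M) (xs : Fin n → M) :
    (ltF s t).Realize v xs ↔ ltM (s.realize (Sum.elim v xs)) (t.realize (Sum.elim v xs)) := by
  simp [ltF, ltM]

@[simp] lemma realize_bex (t : LA.Term (α ⊕ Fin n)) (φ : LA.BoundedFormula α (n + 1)) (v : α → M)
    (xs : Fin n → M) :
    (bex t φ).Realize v xs ↔
      ∃ a, leM a (t.realize (Sum.elim v xs)) ∧ φ.Realize v (Fin.snoc xs a) := by
  simp [bex, BoundedFormula.realize_ex]

@[simp] lemma realize_ballLt (t : LA.Term (α ⊕ Fin n)) (φ : LA.BoundedFormula α (n + 1))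
    (v : α → M) (xs : Fin n → M) :
    (ballLt t φ).Realize v xs ↔
      ∀ a, ltM a (t.realize (Sum.elim v xs)) → φ.Realize v (Fin.snoc xs a) := by
  simp [ballLt]

/-- Negation-free `Δ₀` formulas, which suffice for the certificate `diagCert` below. -/
inductive IsDelta0 : {k : ℕ} → LA.BoundedFormula α k → Prop
  | equal {k} (s t : LA.Term (α ⊕ Fin k)) : IsDelta0 (s =' t)
  | le {k} (s t : LA.Term (α ⊕ Fin k)) : IsDelta0 (leF s t)
  | inf {k} {φ ψ : LA.BoundedFormula α k} : IsDelta0 φ → IsDelta0 ψ → IsDelta0 (φ ⊓ ψ)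
  | sup {k} {φ ψ : LA.BoundedFormula α k} : IsDelta0 φ → IsDelta0 ψ → IsDelta0 (φ ⊔ ψ)
  | bex {k} (t : LA.Term (α ⊕ Fin k)) {φ : LA.BoundedFormula α (k + 1)} :
      IsDelta0 φ → IsDelta0 (bex t φ)
  | ballLt {k} (t : LA.Term (α ⊕ Fin k)) {φ : LA.BoundedFormula α (k + 1)} :
      IsDelta0 φ → IsDelta0 (ballLt t φ)

/-- The numerals form an initial segment of every model of `Q`, so `Δ₀` formulas are absolute. -/
theorem IsQModel.realize_comp_numM_iff (hM : IsQModel M) {φ : LA.BoundedFormula α n}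
    (hφ : IsDelta0 φ) (v : α → ℕ) (xs : Fin n → ℕ) :
    φ.Realize (numM ∘ v : α → M) (numM ∘ xs) ↔ φ.Realize v xs := by
  induction hφ with
  | equal s t =>
    simp only [BoundedFormula.realize_bdEqual, hM.realize_comp_numM]
    exact hM.numM_injective.eq_iff
  | le s t =>
    simp only [realize_leF, hM.realize_comp_numM, hM.leM_numM_iff, leM_iff_le]
    exact ⟨fun ⟨k, hk, h⟩ => hM.numM_injective h ▸ hk, fun h => ⟨_, h, rfl⟩⟩
  | inf _ _ ih₁ ih₂ => simp only [BoundedFormula.realize_inf, ih₁, ih₂]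
  | sup _ _ ih₁ ih₂ => simp only [BoundedFormula.realize_sup, ih₁, ih₂]
  | bex t _ ih =>
    simp only [realize_bex, hM.realize_comp_numM, hM.leM_numM_iff, leM_iff_le]
    constructor
    · rintro ⟨_, ⟨k, hk, rfl⟩, h⟩
      exact ⟨k, hk, (ih _).1 (by rwa [Fin.comp_snoc])⟩
    · rintro ⟨k, hk, h⟩
      exact ⟨numM k, ⟨k, hk, rfl⟩, by rw [← Fin.comp_snoc]; exact (ih _).2 h⟩
  | ballLt t _ ih =>
    simp only [realize_ballLt, hM.realize_comp_numM, hM.ltM_numM_iff, ltM_iff_lt]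
    constructor
    · intro h k hk
      exact (ih _).1 (by rw [Fin.comp_snoc]; exact h _ ⟨k, hk, rfl⟩)
    · rintro h _ ⟨k, hk, rfl⟩
      rw [← Fin.comp_snoc]
      exact (ih _).2 (h k hk)

end Delta0

section LeastWitness

variable {M : Type} [LA.Structure M] {β : Type}

@[simp] lemma comp_vecCons {γ δ : Type} {k : ℕ} (f : γ → δ) (a : γ) (v : Fin k → γ) :
    f ∘ Matrix.vecCons a v = Matrix.vecCons (f a) (f ∘ v) :=
  Fin.comp_cons f a v

@[simp] lemma comp_vecEmpty {γ δ : Type} (f : γ → δ) : f ∘ ![] = ![] :=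
  Subsingleton.elim _ _

def atBound {m : ℕ} (φ : LA.Formula β) (g : β → Fin m) : LA.BoundedFormula Empty m :=
  BoundedFormula.relabel (Sum.inr ∘ g) φ (k := 0)

@[simp] lemma realize_atBound {m : ℕ} (φ : LA.Formula β) (g : β → Fin m) (v : Empty → M)
    (xs : Fin m → M) : (atBound φ g).Realize v xs ↔ φ.Realize (xs ∘ g) := by
  rw [atBound, BoundedFormula.realize_relabel, Formula.Realize]
  exact iff_of_eq (congrArg _ (Subsingleton.elim _ _))

lemma IsQModel.realize_formula_comp_numM_iff (hM : IsQModel M) {φ : LA.Formula β}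
    (hφ : IsDelta0 φ) (w : β → ℕ) : φ.Realize (numM ∘ w : β → M) ↔ φ.Realize w := by
  unfold Formula.Realize
  convert hM.realize_comp_numM_iff hφ w default using 2

/-- The formula `y ≤ c ∧ φ(x, c, y)`. -/
def boundedGraph (φ : LA.Formula (Fin 3)) : LA.Formula (Fin 3) :=
  leF (Term.var (Sum.inl 2)) (Term.var (Sum.inl 1)) ⊓ φ

/-- The formula `y = f(x)`, for `φ(x, c, y)` saying that `c` certifies `y = f(x)`:
`∃ c, (y ≤ c ∧ φ(x, c, y)) ∧ ∀ c' < c, ¬ ∃ y', y' ≤ c' ∧ φ(x, c', y')`. -/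
def minWitnessGraph (φ : LA.Formula (Fin 3)) : LA.BoundedFormula Empty 2 :=
  ∃' (atBound (boundedGraph φ) ![1, 2, 0] ⊓
    ∀' (ltF &3 &2 ⟹ ∼(∃' atBound (boundedGraph φ) ![1, 3, 4])))

lemma realize_boundedGraph (φ : LA.Formula (Fin 3)) (w : Fin 3 → M) :
    (boundedGraph φ).Realize w ↔ leM (w 2) (w 1) ∧ φ.Realize w := by
  simp [boundedGraph, Formula.Realize]

lemma realize_minWitnessGraph (φ : LA.Formula (Fin 3)) (v : Empty → M) (a x : M) :
    (minWitnessGraph φ).Realize v ![a, x] ↔ ∃ c, (boundedGraph φ).Realize ![x, c, a] ∧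
      ∀ c', ltM c' c → ∀ y, ¬ (boundedGraph φ).Realize ![x, c', y] := by
  simp [minWitnessGraph]

lemma IsQModel.realize_boundedGraph_numM (hM : IsQModel M) {φ : LA.Formula (Fin 3)}
    (hφ : IsDelta0 φ) (b k : ℕ) (a : M) :
    (boundedGraph φ).Realize ![numM b, numM k, a] ↔
      ∃ m, a = numM m ∧ (boundedGraph φ).Realize ![b, k, m] := by
  have hψ : IsDelta0 (boundedGraph φ) := .inf (.le _ _) hφ
  constructor
  · intro h
    obtain ⟨m, -, rfl⟩ := hM.leM_numM_iff.1 ((realize_boundedGraph φ _).1 h).1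
    refine ⟨m, rfl, (hM.realize_formula_comp_numM_iff hψ ![b, k, m]).1 ?_⟩
    simpa using h
  · rintro ⟨m, rfl, h⟩
    simpa using (hM.realize_formula_comp_numM_iff hψ ![b, k, m]).2 h

/-- Only a standard certificate can be the least one, and `y ≤ c` then makes `y` standard. -/
theorem IsQModel.realize_minWitnessGraph_iff (hM : IsQModel M) {φ : LA.Formula (Fin 3)}
    (hφ : IsDelta0 φ) {f : ℕ → ℕ} (hfun : ∀ x c y, φ.Realize ![x, c, y] → y = f x)
    (htot : ∀ x, ∃ c, f x ≤ c ∧ φ.Realize ![x, c, f x]) (v : Empty → M) (b : ℕ) (a : M) :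
    (minWitnessGraph φ).Realize v ![a, numM b] ↔ a = numM (f b) := by
  classical
  have hgraph : ∀ c y, (boundedGraph φ).Realize ![b, c, y] → y = f b :=
    fun c y h => hfun b c y ((realize_boundedGraph φ _).1 h).2
  have hP : ∃ c y, (boundedGraph φ).Realize ![b, c, y] := by
    obtain ⟨c, hc, h⟩ := htot b
    exact ⟨c, f b, (realize_boundedGraph φ _).2 ⟨leM_iff_le.2 hc, h⟩⟩
  obtain ⟨y₀, hy₀⟩ := Nat.find_spec hP
  rw [realize_minWitnessGraph]
  constructor
  · rintro ⟨c, hc, hmin⟩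
    rcases hM.leM_numM_or_ltM (Nat.find hP) c with hle | hlt
    · obtain ⟨k, -, rfl⟩ := hM.leM_numM_iff.1 hle
      obtain ⟨m, rfl, hm⟩ := (hM.realize_boundedGraph_numM hφ b k a).1 hc
      rw [hgraph k m hm]
    · exact (hmin _ hlt _ ((hM.realize_boundedGraph_numM hφ _ _ _).2 ⟨y₀, rfl, hy₀⟩)).elim
  · rintro rfl
    refine ⟨numM (Nat.find hP), (hM.realize_boundedGraph_numM hφ _ _ _).2
      ⟨f b, rfl, hgraph _ _ hy₀ ▸ hy₀⟩, ?_⟩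
    intro c' hc' y' hy'
    obtain ⟨k, hk, rfl⟩ := hM.ltM_numM_iff.1 hc'
    obtain ⟨m, rfl, hm⟩ := (hM.realize_boundedGraph_numM hφ b k y').1 hy'
    exact Nat.find_min hP hk ⟨m, hm⟩

end LeastWitness

section Coding

open Encodable

def consCode (a b : ℕ) : ℕ := Nat.pair a b + 1

lemma encode_list_cons' {σ : Type} [Encodable σ] (e : σ) (l : List σ) :
    encode (e :: l) = consCode (encode e) (encode l) :=
  encode_list_cons e l

def numCode : ℕ → ℕ
  | 0 => 3
  | n + 1 => consCode 3 (numCode n)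

lemma encode_num {α : Type} [Encodable α] (n : ℕ) : encode (num n : LA.Term α) = numCode n := by
  induction n with
  | zero => rfl
  | succ n ih =>
    change encode (Term.listEncode (num (n + 1) : LA.Term α)) = _
    have : Term.listEncode (num (n + 1) : LA.Term α) =
        Sum.inr ⟨1, ArithFunc.succ⟩ :: Term.listEncode (num n : LA.Term α) := by
      simp [num, succT, Term.listEncode, List.finRange_succ]
    rw [this, encode_list_cons']
    exact congrArg (consCode 3) ih

abbrev ArithSymbol := (Σ k, LA.Term (Empty ⊕ Fin k)) ⊕ ((Σ n, LA.Relations n) ⊕ ℕ)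

lemma encode_numSymbol (n : ℕ) :
    encode (.inl ⟨2, num n⟩ : ArithSymbol) = 2 * Nat.pair 2 (numCode n) := by
  rw [← encode_num (α := Empty ⊕ Fin 2)]
  rfl

/-- The closing tags of `⊓` and `∃'` (which unfold to `∼(· ⟹ ∼·)` and `∼∀'∼`) that follow the
numeral in `diagSentence`. -/
def closingSymbols : List ArithSymbol :=
  [.inr (.inr 4), .inr (.inr 4), .inr (.inr 4), .inr (.inr 4), .inr (.inr 4), .inr (.inr 3),
    .inr (.inr 3), .inr (.inr 2)]

/-- `∃ y x, D(y, x) ∧ C(y) ∧ x = b̄`, arranged so that the numeral is the last leaf: the code of the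
sentence is then a fixed prefix, the numeral, and the fixed `closingSymbols`. -/
def diagSentence (D : LA.BoundedFormula Empty 2) (C : LA.Formula (Fin 1)) (b : ℕ) : LA.Sentence :=
  ∃' ∃' (D ⊓ (atBound C (![0] : Fin 1 → Fin 2) ⊓ (&1 =' num b)))

def prefixSymbols (D : LA.BoundedFormula Empty 2) (C : LA.Formula (Fin 1)) : List ArithSymbol :=
  [.inr (.inr 0), .inr (.inr 1), .inr (.inr 0), .inr (.inr 0), .inr (.inr 1), .inr (.inr 0),
    .inr (.inr 0), .inr (.inr 0)] ++ D.listEncode ++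
    [.inr (.inr 0), .inr (.inr 0), .inr (.inr 0)] ++ (atBound C (![0] : Fin 1 → Fin 2)).listEncode ++
    [.inr (.inr 0), .inl ⟨2, &1⟩]

lemma listEncode_diagSentence (D : LA.BoundedFormula Empty 2) (C : LA.Formula (Fin 1)) (b : ℕ) :
    (diagSentence D C b).listEncode = prefixSymbols D C ++ .inl ⟨2, num b⟩ :: closingSymbols := by
  have inf_def {n : ℕ} (φ ψ : LA.BoundedFormula Empty n) : φ ⊓ ψ = (φ.imp ψ.not).not := rfl
  simp [diagSentence, prefixSymbols, closingSymbols, inf_def, BoundedFormula.ex, BoundedFormula.not,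
    BoundedFormula.listEncode, Term.bdEqual]

lemma realize_diagSentence {M : Type} [LA.Structure M] (D : LA.BoundedFormula Empty 2)
    (C : LA.Formula (Fin 1)) (b : ℕ) (v : Empty → M) (xs : Fin 0 → M) :
    BoundedFormula.Realize (diagSentence D C b) v xs ↔
      ∃ a, D.Realize v ![a, numM b] ∧ C.Realize ![a] := by
  rw [Matrix.empty_eq xs]
  simp [diagSentence, BoundedFormula.realize_ex]

def codeFold (d s : ℕ) : ℕ → ℕ
  | 0 => s
  | i + 1 => consCode (Nat.beta d i) (codeFold d s i)

lemma encode_append_eq_codeFold {σ : Type} [Encodable σ] (d : ℕ) (t : List σ) :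
    ∀ l : List σ, (∀ i (hi : i < l.length), Nat.beta d i = encode l[l.length - 1 - i]) →
      encode (l ++ t) = codeFold d (encode t) l.length
  | [], _ => rfl
  | e :: l, h => by
    have hl : ∀ i (hi : i < l.length), Nat.beta d i = encode l[l.length - 1 - i] := fun i hi => by
      rw [h i (by simp; omega)]
      congr 1
      simp only [List.length_cons, List.getElem_cons]
      rw [dif_neg (by omega)]
      congr 1
      omega
    rw [List.cons_append, encode_list_cons', List.length_cons, codeFold,
      encode_append_eq_codeFold d t l hl, h l.length (by simp)]
    simp

/-- The code of `diagSentence D C x` when `x = ⟨j, d⟩` and `d` lists the codes of the `j` symbols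
of `prefixSymbols D C` from last to first. -/
def diagCode (x : ℕ) : ℕ :=
  codeFold x.unpair.2 (consCode (2 * Nat.pair 2 (numCode x)) (encode closingSymbols)) x.unpair.1

def selfIndex (D : LA.BoundedFormula Empty 2) (C : LA.Formula (Fin 1)) : ℕ :=
  Nat.pair (prefixSymbols D C).length (Nat.unbeta ((prefixSymbols D C).reverse.map encode))

lemma gnum_diagSentence_selfIndex (D : LA.BoundedFormula Empty 2) (C : LA.Formula (Fin 1)) :
    gnum (diagSentence D C (selfIndex D C)) = diagCode (selfIndex D C) := by
  have hβ : ∀ i (hi : i < (prefixSymbols D C).length),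
      Nat.beta (Nat.unbeta ((prefixSymbols D C).reverse.map encode)) i =
        encode (prefixSymbols D C)[(prefixSymbols D C).length - 1 - i] := fun i hi => by
    rw [← List.getElem_reverse (by simpa using hi)]
    exact (Nat.beta_unbeta_coe _ ⟨i, by simpa using hi⟩).trans (List.getElem_map ..)
  rw [gnum, listEncode_diagSentence, encode_append_eq_codeFold _ _ _ hβ, encode_list_cons',
    encode_numSymbol, diagCode, selfIndex, Nat.unpair_pair]

end Coding

section ArithFormulas

variable {α : Type} {n : ℕ}

@[simp] lemma zeroM_nat : zeroM ℕ = 0 := rfl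
@[simp] lemma succM_nat (a : ℕ) : succM a = a + 1 := rfl
@[simp] lemma addM_nat (a b : ℕ) : addM a b = a + b := rfl
@[simp] lemma mulM_nat (a b : ℕ) : mulM a b = a * b := rfl

def pairF (a b c : LA.Term (α ⊕ Fin n)) : LA.BoundedFormula α n :=
  (ltF a b ⊓ (c =' addT (mulT b b) a)) ⊔ (leF b a ⊓ (c =' addT (addT (mulT a a) a) b))

lemma isDelta0_pairF (a b c : LA.Term (α ⊕ Fin n)) : IsDelta0 (pairF a b c) :=
  .sup (.inf (.le _ _) (.equal _ _)) (.inf (.le _ _) (.equal _ _))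

@[simp] lemma realize_pairF (a b c : LA.Term (α ⊕ Fin n)) (v : α → ℕ) (xs : Fin n → ℕ) :
    (pairF a b c).Realize v xs ↔ c.realize (Sum.elim v xs) =
      Nat.pair (a.realize (Sum.elim v xs)) (b.realize (Sum.elim v xs)) := by
  simp only [pairF, BoundedFormula.realize_sup, BoundedFormula.realize_inf, realize_ltF,
    realize_leF, BoundedFormula.realize_bdEqual, realize_addT, realize_mulT,
    addM_nat, mulM_nat, ltM_iff_lt, leM_iff_le, Nat.pair]
  split_ifs with h
  · simp [h, Nat.not_le.2 h]
  · simp [h, Nat.not_lt.1 h]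

lemma eq_beta_iff {d i r : ℕ} : r = Nat.beta d i ↔ ∃ d₁ ≤ d, ∃ d₂ ≤ d, d = Nat.pair d₁ d₂ ∧
    r < (i + 1) * d₂ + 1 ∧ ∃ q ≤ d₁, d₁ = ((i + 1) * d₂ + 1) * q + r := by
  constructor
  · rintro rfl
    refine ⟨_, Nat.unpair_left_le d, _, Nat.unpair_right_le d, (Nat.pair_unpair d).symm,
      Nat.mod_lt _ (Nat.succ_pos _), _, Nat.div_le_self _ _, (Nat.div_add_mod _ _).symm⟩
  · rintro ⟨d₁, -, d₂, -, rfl, hr, q, -, rfl⟩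
    rw [Nat.beta, Nat.unpair_pair, Nat.mul_add_mod, Nat.mod_eq_of_lt hr]

lemma beta_le (d i : ℕ) : Nat.beta d i ≤ d := (Nat.mod_le _ _).trans (Nat.unpair_left_le d)

def betaF (d i r : LA.Term (α ⊕ Fin n)) : LA.BoundedFormula α n :=
  let d₁ : LA.Term (α ⊕ Fin (n + 2)) := weaken &(Fin.last n)
  let d₂ : LA.Term (α ⊕ Fin (n + 2)) := &(Fin.last (n + 1))
  let m := succT (mulT (succT (weaken (weaken i))) d₂)
  bex d <| bex (weaken d) <|
    pairF d₁ d₂ (weaken (weaken d)) ⊓ ltF (weaken (weaken r)) m ⊓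
      bex d₁ (weaken d₁ =' addT (mulT (weaken m) &(Fin.last (n + 2))) (weaken (weaken (weaken r))))

lemma isDelta0_betaF (d i r : LA.Term (α ⊕ Fin n)) : IsDelta0 (betaF d i r) :=
  .bex _ (.bex _ (.inf (.inf (isDelta0_pairF _ _ _) (.le _ _)) (.bex _ (.equal _ _))))

@[simp] lemma realize_betaF (d i r : LA.Term (α ⊕ Fin n)) (v : α → ℕ) (xs : Fin n → ℕ) :
    (betaF d i r).Realize v xs ↔ r.realize (Sum.elim v xs) =
      Nat.beta (d.realize (Sum.elim v xs)) (i.realize (Sum.elim v xs)) := by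
  rw [eq_beta_iff]
  simp only [betaF, realize_bex, realize_pairF, BoundedFormula.realize_inf, realize_ltF,
    BoundedFormula.realize_bdEqual, realize_weaken, realize_addT, realize_mulT, realize_succT,
    Term.realize_var, Function.comp_apply, Sum.elim_inr, Fin.snoc_last, leM_iff_le, ltM_iff_lt,
    addM_nat, mulM_nat, succM_nat, and_assoc]

def betaConsF (s i a b : LA.Term (α ⊕ Fin n)) : LA.BoundedFormula α n :=
  bex s <| betaF (weaken s) (weaken i) &(Fin.last n) ⊓
    bex &(Fin.last n) (pairF (weaken (weaken a)) (weaken (weaken b)) &(Fin.last (n + 1)) ⊓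
      (weaken &(Fin.last n) =' succT &(Fin.last (n + 1))))

lemma isDelta0_betaConsF (s i a b : LA.Term (α ⊕ Fin n)) : IsDelta0 (betaConsF s i a b) :=
  .bex _ (.inf (isDelta0_betaF _ _ _) (.bex _ (.inf (isDelta0_pairF _ _ _) (.equal _ _))))

@[simp] lemma realize_betaConsF (s i a b : LA.Term (α ⊕ Fin n)) (v : α → ℕ) (xs : Fin n → ℕ) :
    (betaConsF s i a b).Realize v xs ↔
      Nat.beta (s.realize (Sum.elim v xs)) (i.realize (Sum.elim v xs)) =
        consCode (a.realize (Sum.elim v xs)) (b.realize (Sum.elim v xs)) := by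
  simp only [betaConsF, realize_bex, realize_betaF, BoundedFormula.realize_inf, realize_pairF,
    BoundedFormula.realize_bdEqual, realize_weaken, realize_succT, Term.realize_var,
    Function.comp_apply, Sum.elim_inr, Fin.snoc_last, leM_iff_le, succM_nat]
  constructor
  · rintro ⟨_, -, rfl, _, -, rfl, h⟩
    exact h
  · intro h
    exact ⟨_, beta_le _ _, rfl, _, by rw [h, consCode]; omega, rfl, h⟩

def stepF (s i a : LA.Term (α ⊕ Fin n)) : LA.BoundedFormula α n :=
  bex s <| betaF (weaken s) (weaken i) &(Fin.last n) ⊓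
    betaConsF (weaken s) (succT (weaken i)) (weaken a) &(Fin.last n)

lemma isDelta0_stepF (s i a : LA.Term (α ⊕ Fin n)) : IsDelta0 (stepF s i a) :=
  .bex _ (.inf (isDelta0_betaF _ _ _) (isDelta0_betaConsF _ _ _ _))

@[simp] lemma realize_stepF (s i a : LA.Term (α ⊕ Fin n)) (v : α → ℕ) (xs : Fin n → ℕ) :
    (stepF s i a).Realize v xs ↔
      Nat.beta (s.realize (Sum.elim v xs)) (i.realize (Sum.elim v xs) + 1) =
        consCode (a.realize (Sum.elim v xs))
          (Nat.beta (s.realize (Sum.elim v xs)) (i.realize (Sum.elim v xs))) := by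
  simp only [stepF, realize_bex, realize_betaF, BoundedFormula.realize_inf, realize_betaConsF,
    realize_weaken, realize_succT, Term.realize_var, Function.comp_apply, Sum.elim_inr,
    Fin.snoc_last, leM_iff_le, succM_nat]
  exact ⟨fun ⟨_, _, rfl, h⟩ => h, fun h => ⟨_, beta_le _ _, rfl, h⟩⟩

/-- The code `β(s, 0)` is that of the numeral symbol for `β(e, x)` (see `encode_numSymbol`) consed
onto `k`. -/
def seedF (s e x k : LA.Term (α ⊕ Fin n)) : LA.BoundedFormula α n :=
  bex e <| betaF (weaken e) (weaken x) &(Fin.last n) ⊓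
    bex (weaken s) (pairF (num 2) (weaken &(Fin.last n)) &(Fin.last (n + 1)) ⊓
      betaConsF (weaken (weaken s)) zeroT (mulT (num 2) &(Fin.last (n + 1))) (weaken (weaken k)))

lemma isDelta0_seedF (s e x k : LA.Term (α ⊕ Fin n)) : IsDelta0 (seedF s e x k) :=
  .bex _ <| .inf (isDelta0_betaF _ _ _) <|
    .bex _ (.inf (isDelta0_pairF _ _ _) (isDelta0_betaConsF _ _ _ _))

@[simp] lemma realize_seedF (s e x k : LA.Term (α ⊕ Fin n)) (v : α → ℕ) (xs : Fin n → ℕ) :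
    (seedF s e x k).Realize v xs ↔
      Nat.beta (s.realize (Sum.elim v xs)) 0 =
        consCode (2 * Nat.pair 2 (Nat.beta (e.realize (Sum.elim v xs)) (x.realize (Sum.elim v xs))))
          (k.realize (Sum.elim v xs)) := by
  simp only [seedF, realize_bex, realize_betaF, BoundedFormula.realize_inf, realize_pairF,
    realize_betaConsF, realize_weaken, realize_num, realize_zeroT, realize_mulT, Term.realize_var,
    Function.comp_apply, Sum.elim_inr, Fin.snoc_last, leM_iff_le, numM_nat, zeroM_nat, mulM_nat]
  constructor
  · rintro ⟨_, -, rfl, _, -, rfl, h⟩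
    exact h
  · intro h
    refine ⟨_, beta_le _ _, rfl, _, ?_, rfl, h⟩
    calc _ ≤ 2 * _ := Nat.le_mul_of_pos_left _ two_pos
      _ ≤ consCode _ _ := (Nat.left_le_pair _ _).trans (Nat.le_succ _)
      _ = _ := h.symm
      _ ≤ _ := beta_le _ 0

end ArithFormulas

section DiagonalFunction

open Encodable

def fvar {k : ℕ} (i : Fin 3) : LA.Term (Fin 3 ⊕ Fin k) := Term.var (Sum.inl i)

/-- `diagCert(x, c, y)`: `c` bounds codes `e` of the numeral codes `numCode 0, …, numCode x`
and `f` of the partial codes of `diagSentence` computed by `diagCode x = y`. -/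
def diagCert : LA.Formula (Fin 3) :=
  bex (fvar 0) <| bex (fvar 0) <| bex (fvar 1) <| bex (fvar 1) <|
    pairF &0 &1 (fvar 0) ⊓ betaF &2 zeroT (num 3) ⊓ ballLt (fvar 0) (stepF &2 &4 (num 3)) ⊓
      seedF &3 &2 (fvar 0) (num (encode closingSymbols)) ⊓
      ballLt &0 (bex &1 (betaF &1 &4 &5 ⊓ stepF &3 &4 &5)) ⊓ betaF &3 &0 (fvar 2)

lemma isDelta0_diagCert : IsDelta0 diagCert :=
  .bex _ <| .bex _ <| .bex _ <| .bex _ <|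
    .inf (.inf (.inf (.inf (.inf (isDelta0_pairF _ _ _) (isDelta0_betaF _ _ _))
      (.ballLt _ (isDelta0_stepF _ _ _))) (isDelta0_seedF _ _ _ _))
      (.ballLt _ (.bex _ (.inf (isDelta0_betaF _ _ _) (isDelta0_stepF _ _ _)))))
      (isDelta0_betaF _ _ _)

lemma exists_le_beta_eq_and {d i : ℕ} {P : ℕ → Prop} :
    (∃ u ≤ d, u = Nat.beta d i ∧ P u) ↔ P (Nat.beta d i) :=
  ⟨fun ⟨_, _, hu, h⟩ => hu ▸ h, fun h => ⟨_, beta_le d i, rfl, h⟩⟩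

lemma realize_diagCert (x c y : ℕ) : diagCert.Realize ![x, c, y] ↔
    ∃ j ≤ x, ∃ d ≤ x, ∃ e ≤ c, ∃ f ≤ c, x = Nat.pair j d ∧ Nat.beta e 0 = 3 ∧
      (∀ i < x, Nat.beta e (i + 1) = consCode 3 (Nat.beta e i)) ∧
      Nat.beta f 0 = consCode (2 * Nat.pair 2 (Nat.beta e x)) (encode closingSymbols) ∧
      (∀ i < j, Nat.beta f (i + 1) = consCode (Nat.beta d i) (Nat.beta f i)) ∧
      y = Nat.beta f j := by
  unfold Formula.Realize
  simp only [Matrix.empty_eq default]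
  simp [diagCert, fvar, exists_le_beta_eq_and, and_assoc, eq_comm (a := 3)]

lemma exists_beta_eq (g : ℕ → ℕ) (n : ℕ) : ∃ e, ∀ i ≤ n, Nat.beta e i = g i :=
  ⟨Nat.unbeta (List.ofFn fun i : Fin (n + 1) => g i), fun i hi =>
    (Nat.beta_unbeta_coe _ ⟨i, by simp; omega⟩).trans (List.getElem_ofFn _)⟩

lemma eq_of_same_recursion {s t : ℕ → ℕ} {F : ℕ → ℕ → ℕ} {n : ℕ} (h0 : s 0 = t 0)
    (hs : ∀ i < n, s (i + 1) = F i (s i)) (ht : ∀ i, t (i + 1) = F i (t i)) :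
    ∀ i ≤ n, s i = t i := by
  intro i hi
  induction i with
  | zero => exact h0
  | succ i ih => rw [hs i hi, ht, ih (by omega)]

lemma eq_diagCode_of_realize_diagCert {x c y : ℕ} (h : diagCert.Realize ![x, c, y]) :
    y = diagCode x := by
  obtain ⟨j, -, d, -, e, -, f, -, hx, he₀, he, hf₀, hf, rfl⟩ := (realize_diagCert x c y).1 h
  have hnum := eq_of_same_recursion (t := numCode) he₀ he (fun _ => rfl) x le_rfl
  rw [hnum] at hf₀
  have hfold := eq_of_same_recursion (t := codeFold d _) hf₀ hf (fun _ => rfl) j le_rfl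
  rw [hfold, diagCode, hx, Nat.unpair_pair]
  rfl

lemma exists_realize_diagCert (x : ℕ) :
    ∃ c, diagCode x ≤ c ∧ diagCert.Realize ![x, c, diagCode x] := by
  obtain ⟨e, he⟩ := exists_beta_eq numCode x
  obtain ⟨f, hf⟩ := exists_beta_eq (codeFold x.unpair.2
    (consCode (2 * Nat.pair 2 (numCode x)) (encode closingSymbols))) x.unpair.1
  have hy : Nat.beta f x.unpair.1 = diagCode x := hf _ le_rfl
  refine ⟨e + f, hy ▸ (beta_le f _).trans (Nat.le_add_left f e), (realize_diagCert _ _ _).2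
    ⟨_, Nat.unpair_left_le x, _, Nat.unpair_right_le x, e, Nat.le_add_right e f, f,
      Nat.le_add_left f e, (Nat.pair_unpair x).symm, he 0 (Nat.zero_le x), fun i hi => ?_, ?_,
      fun i hi => ?_, hy.symm⟩⟩
  · rw [he i hi.le, he (i + 1) hi]
    rfl
  · rw [hf 0 (Nat.zero_le _), he x le_rfl]
    rfl
  · rw [hf i hi.le, hf (i + 1) hi]
    rfl

end DiagonalFunction

theorem diagonal_lemma_general (T : LA.Theory) (hQ : Q ⊆ T)
    (C : LA.Formula (Fin 1)) :
    ∃ G : LA.Sentence,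
      T ⊨ᵇ (G ⇔ BoundedFormula.subst C fun _ => (num (gnum G) : LA.Term Empty)) := by
  let D := minWitnessGraph diagCert
  refine ⟨diagSentence D C (selfIndex D C), fun M v xs => ?_⟩
  have : M ⊨ Q := M.is_model.mono hQ
  have hM : IsQModel M := .of_model
  have hD (b : ℕ) (a : M) : D.Realize v ![a, numM b] ↔ a = numM (diagCode b) :=
    hM.realize_minWitnessGraph_iff isDelta0_diagCert (fun _ _ _ => eq_diagCode_of_realize_diagCert)
      exists_realize_diagCert v b a
  rw [BoundedFormula.realize_iff, realize_diagSentence, BoundedFormula.realize_subst,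
    gnum_diagSentence_selfIndex]
  simp only [hD, exists_eq_left]
  rw [realize_num, Matrix.vec_single_eq_const, Formula.Realize, Subsingleton.elim xs default]

/-- Diagonal (fixed point) lemma: if `T` is a computably axiomatized
extension of Robinson's arithmetic, then for every formula `C(x)` with one free variable
there is a sentence `G` with `T ⊢ G ↔ C(⌜G⌝)`. -/
theorem diagonal_lemma (T : LA.Theory) (hQ : Q ⊆ T) (hax : ComputablyAxiomatized T)
    (C : LA.Formula (Fin 1)) :
    ∃ G : LA.Sentence,
      T ⊨ᵇ (G ⇔ BoundedFormula.subst C fun _ => (num (gnum G) : LA.Term Empty)) :=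
  diagonal_lemma_general T hQ C
end

section
/- Gödel's first incompleteness theorem under ω-consistency: if T is an ω-consistent, computably axiomatized extension of Robinson's arithmetic, and G is a sentence with T ⊢ G ↔ ¬Bew(⌜G⌝), then T ⊬ G and T ⊬ ¬G. -/
open FirstOrder FirstOrder.Language

/-- The sentence `Proof(m̄, k̄)`, for a proof-predicate formula `Pr`. -/
def prS (Pr : LA.Formula (Fin 2)) (m k : ℕ) : LA.Sentence :=
  BoundedFormula.subst Pr (![num m, num k] : Fin 2 → LA.Term Empty)

/-- The sentence `Bew(k̄) = ∃z Proof(z, k̄)`, for a proof-predicate formula `Pr`. -/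
noncomputable def bewAt (Pr : LA.Formula (Fin 2)) (k : ℕ) : LA.Sentence :=
  Formula.iExs (Fin 1)
    (BoundedFormula.subst Pr
      (![Term.var (Sum.inr 0), Term.relabel Sum.inl (num k)] : Fin 2 → LA.Term (Empty ⊕ Fin 1)))

/-- `T` is ω-consistent: whenever `T ⊢ ∃x B(x)`, there is a natural number `n` such that
`T` does not prove `¬B(n̄)`. -/
noncomputable def OmegaConsistent (T : LA.Theory) : Prop :=
  ∀ B : LA.Formula (Empty ⊕ Fin 1),
    (T ⊨ᵇ Formula.iExs (Fin 1) B) →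
      ∃ n : ℕ, ¬ T ⊨ᵇ BoundedFormula.not
        (BoundedFormula.subst B
          (Sum.elim Empty.elim fun _ => (num n : LA.Term Empty)))

/-!
If `T ⊢ G`, some `m` codes a proof of `G`, so `T ⊢ Proof(m̄, ⌜G⌝)`, hence `T ⊢ Bew(⌜G⌝)` and
`T ⊢ ¬G`, contradicting the consistency of `T`. If `T ⊢ ¬G`, then by consistency no `m` codes a
proof of `G`, so `T ⊢ ¬Proof(m̄, ⌜G⌝)` for every `m`, while `T ⊢ ∃x Proof(x, ⌜G⌝)`: this
contradicts ω-consistency.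
-/

namespace FirstOrder.Language.Theory

variable {L : Language} {T : L.Theory}

theorem IsSatisfiable.not_models_not (hT : T.IsSatisfiable) {φ : L.Sentence} (h : T ⊨ᵇ φ) :
    ¬ T ⊨ᵇ φ.not := fun hn =>
  let ⟨M⟩ := hT
  (models_sentence_iff.1 hn M) (models_sentence_iff.1 h M)

theorem models_not_iff_of_models_iff_not {α : Type*} {n : ℕ} {φ ψ : L.BoundedFormula α n}
    (h : T ⊨ᵇ φ ⇔ ψ.not) : T ⊨ᵇ φ.not ↔ T ⊨ᵇ ψ := by
  refine ⟨fun hφ M v xs => ?_, fun hψ M v xs => ?_⟩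
  all_goals
    have hM := h M v xs
    simp only [BoundedFormula.realize_iff, BoundedFormula.realize_not] at hM ⊢
  · exact not_not.1 (mt hM.2 (hφ M v xs))
  · exact mt hM.1 (not_not.2 (hψ M v xs))

end FirstOrder.Language.Theory

def bewMatrix (Pr : LA.Formula (Fin 2)) (k : ℕ) : LA.Formula (Empty ⊕ Fin 1) :=
  BoundedFormula.subst Pr
    (![Term.var (Sum.inr 0), Term.relabel Sum.inl (num k)] : Fin 2 → LA.Term (Empty ⊕ Fin 1))

section Realize

variable {M : Type*} [LA.Structure M] (Pr : LA.Formula (Fin 2))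

abbrev numVal (M : Type*) [LA.Structure M] (n : ℕ) : M := (num n : LA.Term Empty).realize default

theorem realize_prS (m k : ℕ) :
    M ⊨ prS Pr m k ↔ Pr.Realize ![numVal M m, numVal M k] := by
  simp only [prS, Sentence.Realize, Formula.Realize, BoundedFormula.realize_subst]
  refine iff_of_eq (congrArg₂ _ (funext fun i => ?_) rfl)
  fin_cases i <;> rfl

theorem realize_bewMatrix (k : ℕ) (v : Empty ⊕ Fin 1 → M) :
    (bewMatrix Pr k).Realize v ↔ Pr.Realize ![v (Sum.inr 0), numVal M k] := by
  simp only [bewMatrix, Formula.Realize, BoundedFormula.realize_subst]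
  refine iff_of_eq (congrArg₂ _ (funext fun i => ?_) rfl)
  fin_cases i
  · rfl
  · exact Term.realize_relabel.trans (congrArg (Term.realize · (num k)) (Subsingleton.elim _ _))

theorem realize_bewMatrix_subst_num (n k : ℕ) :
    M ⊨ (bewMatrix Pr k).subst (Sum.elim Empty.elim fun _ => num n) ↔ M ⊨ prS Pr n k := by
  rw [Sentence.Realize, Formula.Realize, BoundedFormula.realize_subst, ← Formula.Realize,
    realize_bewMatrix, realize_prS]
  rfl

theorem realize_bewAt (k : ℕ) : M ⊨ bewAt Pr k ↔ ∃ x : M, Pr.Realize ![x, numVal M k] := by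
  rw [Sentence.Realize, bewAt, Formula.realize_iExs]
  exact ⟨fun ⟨x, hx⟩ => ⟨x 0, (realize_bewMatrix Pr k _).1 hx⟩,
    fun ⟨x, hx⟩ => ⟨fun _ => x, (realize_bewMatrix Pr k _).2 hx⟩⟩

end Realize

variable {T : LA.Theory} {Pr : LA.Formula (Fin 2)}

theorem models_bewAt_of_models_prS {m k : ℕ} (h : T ⊨ᵇ prS Pr m k) : T ⊨ᵇ bewAt Pr k :=
  Theory.models_sentence_iff.2 fun M =>
    (realize_bewAt Pr k).2 ⟨_, (realize_prS Pr m k).1 (Theory.models_sentence_iff.1 h M)⟩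

theorem OmegaConsistent.isSatisfiable (hT : OmegaConsistent T) : T.IsSatisfiable := by
  by_contra h
  obtain ⟨_, hn⟩ := hT ⊥ fun M => (h ⟨M⟩).elim
  exact hn fun M => (h ⟨M⟩).elim

theorem OmegaConsistent.not_models_bewAt (hT : OmegaConsistent T) {k : ℕ}
    (hrefute : ∀ n, T ⊨ᵇ (prS Pr n k).not) : ¬ T ⊨ᵇ bewAt Pr k := fun hbew =>
  let ⟨n, hn⟩ := hT (bewMatrix Pr k) hbew
  hn <| Theory.models_sentence_iff.2 fun M => by
    rw [Sentence.realize_not, realize_bewMatrix_subst_num, ← Sentence.realize_not]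
    exact Theory.models_sentence_iff.1 (hrefute n) M

theorem godel_first_omega_general (T : LA.Theory) (homega : OmegaConsistent T) (Pf : ℕ → ℕ → Prop)
    (hPfAdequate : ∀ A : LA.Sentence, (T ⊨ᵇ A) ↔ ∃ m, Pf m (gnum A))
    (Pr : LA.Formula (Fin 2))
    (hRep : ∀ m k, Pf m k → T ⊨ᵇ prS Pr m k)
    (hRepNot : ∀ m k, ¬ Pf m k → T ⊨ᵇ BoundedFormula.not (prS Pr m k))
    (G : LA.Sentence)
    (hG : T ⊨ᵇ (G ⇔ BoundedFormula.not (bewAt Pr (gnum G)))) :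
    ¬ (T ⊨ᵇ G) ∧ ¬ (T ⊨ᵇ BoundedFormula.not G) := by
  have hsat := homega.isSatisfiable
  have hnotG_iff_bew := Theory.models_not_iff_of_models_iff_not hG
  refine ⟨fun hprovG => ?_, fun hrefG => ?_⟩
  · obtain ⟨m, hm⟩ := (hPfAdequate G).1 hprovG
    exact hsat.not_models_not hprovG
      (hnotG_iff_bew.2 (models_bewAt_of_models_prS (hRep m _ hm)))
  · have hnoProof : ∀ m, ¬ Pf m (gnum G) := fun m hm =>
      hsat.not_models_not ((hPfAdequate G).2 ⟨m, hm⟩) hrefG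
    exact homega.not_models_bewAt (fun n => hRepNot n _ (hnoProof n)) (hnotG_iff_bew.1 hrefG)

/-- Gödel's first incompleteness theorem under ω-consistency: if `T` is
an ω-consistent, computably axiomatized extension of Robinson's arithmetic, `Bew` its
standard provability predicate, and `G` a sentence with `T ⊢ G ↔ ¬Bew(⌜G⌝)`, then `T ⊬ G`
and `T ⊬ ¬G`. -/
theorem godel_first_omega (T : LA.Theory) (hQ : Q ⊆ T)
    (hax : ComputablyAxiomatized T) (homega : OmegaConsistent T)
    (Pf : ℕ → ℕ → Prop) (hPfComp : ComputablePred fun p : ℕ × ℕ => Pf p.1 p.2)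
    (hPfAdequate : ∀ A : LA.Sentence, (T ⊨ᵇ A) ↔ ∃ m, Pf m (gnum A))
    (Pr : LA.Formula (Fin 2))
    (hRep : ∀ m k, Pf m k → T ⊨ᵇ prS Pr m k)
    (hRepNot : ∀ m k, ¬ Pf m k → T ⊨ᵇ BoundedFormula.not (prS Pr m k))
    (G : LA.Sentence)
    (hG : T ⊨ᵇ (G ⇔ BoundedFormula.not (bewAt Pr (gnum G)))) :
    ¬ (T ⊨ᵇ G) ∧ ¬ (T ⊨ᵇ BoundedFormula.not G) :=
  godel_first_omega_general T homega Pf hPfAdequate Pr hRep hRepNot G hG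
end
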